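/- arXiv:2411.19272 — 4 statements merged into one kernel-verified Lean document; each statement's English description precedes it below -/
import Mathlib

section
/- Let g, h: X → ℝ ∪ {+∞} be lower semicontinuous, proper, convex functions and C ⊆ X a nonempty closed convex set with (dom g) ∩ C ≠ ∅. If x̄ ∈ (dom g) ∩ (dom h) ∩ C is a local solution of the problem: minimize f(x) = g(x) − h(x) subject to x ∈ C, then ∂h(x̄) ⊆ ∂(g + δ_C)(x̄). -/
open Pointwise Topology

/-- A generalized polyhedral convex set: the intersection of a closed affine subspace
with finitely many closed half-spaces given by continuous linear functionals. -/
def IsGPCS (X : Type*) [AddCommGroup X] [Module ℝ X] [TopologicalSpace X] (S : Set X) : Prop :=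
  ∃ (L : AffineSubspace ℝ X) (p : ℕ) (a : Fin p → (X →L[ℝ] ℝ)) (c : Fin p → ℝ),
    IsClosed (L : Set X) ∧ S = {x : X | x ∈ L ∧ ∀ k, a k x ≤ c k}

/-- The epigraph of an extended-real-valued function. -/
def epigraph {X : Type*} (ψ : X → EReal) : Set (X × ℝ) := {p | ψ p.1 ≤ (p.2 : EReal)}

/-- A generalized polyhedral convex function: one whose epigraph is a generalized
polyhedral convex set in `X × ℝ`. -/
def IsGPCF (X : Type*) [AddCommGroup X] [Module ℝ X] [TopologicalSpace X] (ψ : X → EReal) : Prop :=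
  IsGPCS (X × ℝ) (epigraph ψ)

/-- A proper function: not identically `+∞` and never `-∞`. -/
def ProperFn {X : Type*} (ψ : X → EReal) : Prop := (∃ x, ψ x ≠ ⊤) ∧ ∀ x, ψ x ≠ ⊥

/-- Convexity of an extended-real-valued function, via convexity of the epigraph. -/
def ConvexFn {X : Type*} [AddCommGroup X] [Module ℝ X] (ψ : X → EReal) : Prop :=
  Convex ℝ (epigraph ψ)

/-- The effective domain of an extended-real-valued function. -/
def domFn {X : Type*} (ψ : X → EReal) : Set X := {x | ψ x ≠ ⊤}

open Classical in
/-- The indicator function of a set: `0` on the set, `+∞` outside. -/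
noncomputable def indFn {X : Type*} (C : Set X) : X → EReal := fun x => if x ∈ C then 0 else ⊤

open Classical in
/-- The DC objective `g - h` with the convention `(+∞) - (+∞) = +∞`. -/
noncomputable def dcObj {X : Type*} (g h : X → EReal) : X → EReal :=
  fun x => if g x = ⊤ ∧ h x = ⊤ then ⊤ else g x - h x

/-- The subdifferential (in the sense of convex analysis) of `φ` at `x₀`. -/
def SubdiffAt {X : Type*} [AddCommGroup X] [Module ℝ X] [TopologicalSpace X]
    (φ : X → EReal) (x₀ : X) : Set (X →L[ℝ] ℝ) :=
  {p | ∀ x : X, ((p x - p x₀ : ℝ) : EReal) ≤ φ x - φ x₀}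

/-- The subdifferential of a function defined on the dual space, with values in `X`
(the dual of `X*` in the weak* topology). -/
def SubdiffStarAt {X : Type*} [AddCommGroup X] [Module ℝ X] [TopologicalSpace X]
    (Φ : (X →L[ℝ] ℝ) → EReal) (p₀ : X →L[ℝ] ℝ) : Set X :=
  {x | ∀ p : X →L[ℝ] ℝ, ((p x - p₀ x : ℝ) : EReal) ≤ Φ p - Φ p₀}

/-- The normal cone to a convex set `C` at `x₀ ∈ C`. -/
def normalConeAt {X : Type*} [AddCommGroup X] [Module ℝ X] [TopologicalSpace X]
    (C : Set X) (x₀ : X) : Set (X →L[ℝ] ℝ) :=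
  {p | ∀ x ∈ C, p x - p x₀ ≤ 0}

/-- The Fenchel conjugate function. -/
noncomputable def conjFn {X : Type*} [AddCommGroup X] [Module ℝ X] [TopologicalSpace X]
    (φ : X → EReal) : (X →L[ℝ] ℝ) → EReal :=
  fun p => ⨆ x : X, (((p x : ℝ) : EReal) - φ x)

/-- `x₀` is a local solution of: minimize `g - h` over `C`. -/
def IsLocalSolution {X : Type*} [TopologicalSpace X] (g h : X → EReal) (C : Set X)
    (x₀ : X) : Prop :=
  x₀ ∈ C ∧ ∃ U ∈ nhds x₀, ∀ x ∈ C ∩ U, dcObj g h x₀ ≤ dcObj g h x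

/-- `x₀` is a (global) solution of: minimize `g - h` over `C`. -/
def IsSolution {X : Type*} (g h : X → EReal) (C : Set X) (x₀ : X) : Prop :=
  x₀ ∈ C ∧ ∀ x ∈ C, dcObj g h x₀ ≤ dcObj g h x

/-- `S` is open in the relative topology of `C`. -/
def RelOpenIn {X : Type*} [TopologicalSpace X] (C S : Set X) : Prop :=
  ∃ V : Set X, IsOpen V ∧ S = C ∩ V

/-- A semi-closed generalized polyhedral convex subset of `C`: the intersection of a
generalized polyhedral convex subset of `C` with a convex subset of `C` that is open
in the relative topology of `C`. -/
def IsSemiClosedGPCSIn {X : Type*} [AddCommGroup X] [Module ℝ X] [TopologicalSpace X]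
    (C S : Set X) : Prop :=
  ∃ P Q : Set X, IsGPCS X P ∧ P ⊆ C ∧ Convex ℝ Q ∧ Q ⊆ C ∧ RelOpenIn C Q ∧ S = P ∩ Q

/-!
If `p ∈ ∂h(x₀)`, local optimality of `x₀` for `g - h` gives `p y - p x₀ ≤ h y - h x₀ ≤ g y - g x₀`
for `y ∈ C` near `x₀`. So `p` is a subgradient of `g` at `x₀` relative to `C`, locally; convexity
of `g` and of `C` turns this into the global inequality on `C`: a step of length `t` from `x₀`
towards `x ∈ C` stays near `x₀` for small `t` and raises `g` by at most `t (g x - g x₀)`.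
-/

section

variable {X : Type*} [AddCommGroup X] [Module ℝ X]

theorem ConvexFn.le_add_smul_sub {g : X → EReal} (hg : ConvexFn g) {x y : X} {a b t : ℝ}
    (ha : g x ≤ a) (hb : g y ≤ b) (ht₀ : 0 ≤ t) (ht₁ : t ≤ 1) :
    g (x + t • (y - x)) ≤ ((a + t * (b - a) : ℝ) : EReal) := by
  have hmem : g ((1 - t) • x + t • y) ≤ (((1 - t) * a + t * b : ℝ) : EReal) :=
    hg (show (x, a) ∈ epigraph g from ha) (show (y, b) ∈ epigraph g from hb)
      (sub_nonneg.2 ht₁) ht₀ (sub_add_cancel 1 t)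
  convert hmem using 2
  · module
  · ring

variable [TopologicalSpace X]

theorem IsLocalSolution.eventually_subgradient_le {g h : X → EReal} (hg_bot : ∀ x, g x ≠ ⊥)
    (hh_bot : ∀ x, h x ≠ ⊥) {C : Set X} {x₀ : X} (hgx₀ : g x₀ ≠ ⊤) (hhx₀ : h x₀ ≠ ⊤)
    (hloc : IsLocalSolution g h C x₀) {p : X →L[ℝ] ℝ} (hp : p ∈ SubdiffAt h x₀) :
    ∀ᶠ y in 𝓝 x₀, y ∈ C → ((p y - p x₀ : ℝ) : EReal) ≤ g y - g x₀ := by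
  obtain ⟨-, U, hU, hmin⟩ := hloc
  filter_upwards [hU] with y hyU hyC
  have hdc := hmin y ⟨hyC, hyU⟩
  have hpy := hp y
  unfold dcObj at hdc
  lift g x₀ to ℝ using ⟨hgx₀, hg_bot x₀⟩ with a ha
  lift h x₀ to ℝ using ⟨hhx₀, hh_bot x₀⟩ with b hb
  by_cases hgy : g y = ⊤
  · simp [hgy]
  lift g y to ℝ using ⟨hgy, hg_bot y⟩ with c hc
  by_cases hhy : h y = ⊤
  · simp [hhy, ← EReal.coe_sub] at hdc
  lift h y to ℝ using ⟨hhy, hh_bot y⟩ with d hd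
  simp only [EReal.coe_ne_top, false_and, if_false,
    ← EReal.coe_sub, EReal.coe_le_coe_iff] at hdc hpy ⊢
  linarith

theorem mem_subdiffAt_add_indFn {g : X → EReal} (hg_bot : ∀ x, g x ≠ ⊥) {C : Set X} {x₀ : X}
    (hx₀C : x₀ ∈ C) (hx₀ : g x₀ ≠ ⊤) {p : X →L[ℝ] ℝ} (hp : ∀ x ∈ C, ((p x - p x₀ : ℝ) : EReal) ≤ g x - g x₀) :
    p ∈ SubdiffAt (fun x => g x + indFn C x) x₀ := by
  intro x
  lift g x₀ to ℝ using ⟨hx₀, hg_bot x₀⟩ with a ha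
  by_cases hx : x ∈ C
  · simpa [indFn, hx, hx₀C, ← ha] using hp x hx
  · simp [indFn, hx, hx₀C, EReal.add_top_of_ne_bot (hg_bot x)]

variable [IsTopologicalAddGroup X] [ContinuousSMul ℝ X]

theorem exists_add_smul_sub_mem_of_mem_nhds {x₀ : X} {U : Set X} (hU : U ∈ 𝓝 x₀) (x : X) :
    ∃ t : ℝ, 0 < t ∧ t ≤ 1 ∧ x₀ + t • (x - x₀) ∈ U := by
  have hcont : Continuous fun t : ℝ => x₀ + t • (x - x₀) := by fun_prop
  have hlim : Filter.Tendsto (fun t : ℝ => x₀ + t • (x - x₀)) (𝓝[>] 0) (𝓝 x₀) := by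
    simpa using (hcont.tendsto 0).mono_left nhdsWithin_le_nhds
  obtain ⟨t, htU, ht⟩ := ((hlim.eventually hU).and (Ioc_mem_nhdsGT one_pos)).exists
  exact ⟨t, ht.1, ht.2, htU⟩

theorem ConvexFn.subgradient_le_of_eventually {g : X → EReal} (hg : ConvexFn g)
    (hg_bot : ∀ x, g x ≠ ⊥) {C : Set X} (hC : Convex ℝ C) {x₀ : X} (hx₀C : x₀ ∈ C)
    (hx₀ : g x₀ ≠ ⊤) {p : X →L[ℝ] ℝ}
    (hp : ∀ᶠ y in 𝓝 x₀, y ∈ C → ((p y - p x₀ : ℝ) : EReal) ≤ g y - g x₀) :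
    ∀ x ∈ C, ((p x - p x₀ : ℝ) : EReal) ≤ g x - g x₀ := by
  intro x hx
  lift g x₀ to ℝ using ⟨hx₀, hg_bot x₀⟩ with a ha
  by_cases hxtop : g x = ⊤
  · simp [hxtop]
  lift g x to ℝ using ⟨hxtop, hg_bot x⟩ with c hc
  obtain ⟨t, ht₀, ht₁, hyp⟩ := exists_add_smul_sub_mem_of_mem_nhds hp x
  set y := x₀ + t • (x - x₀)
  have hy := hyp (hC.add_smul_sub_mem hx₀C hx ⟨ht₀.le, ht₁⟩)
  have hgy : g y ≤ ((a + t * (c - a) : ℝ) : EReal) := hg.le_add_smul_sub ha.ge hc.ge ht₀.le ht₁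
  lift g y to ℝ using ⟨ne_top_of_le_ne_top (EReal.coe_ne_top _) hgy, hg_bot y⟩ with b hb
  have hpy : p y - p x₀ = t * (p x - p x₀) := by simp [y]
  rw [← EReal.coe_sub, EReal.coe_le_coe_iff, hpy] at hy
  rw [EReal.coe_le_coe_iff] at hgy
  rw [← EReal.coe_sub, EReal.coe_le_coe_iff]
  exact le_of_mul_le_mul_left (by linarith) ht₀

end

theorem stmt0_general {X : Type*} [AddCommGroup X] [Module ℝ X] [TopologicalSpace X]
    [IsTopologicalAddGroup X] [ContinuousSMul ℝ X]
    (g h : X → EReal)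
    (hg2 : ProperFn g) (hg3 : ConvexFn g)
    (hh2 : ProperFn h)
    (C : Set X) (hC3 : Convex ℝ C)
    (x₀ : X) (hx₀ : x₀ ∈ domFn g ∩ domFn h ∩ C)
    (hloc : IsLocalSolution g h C x₀) :
    SubdiffAt h x₀ ⊆ SubdiffAt (fun x => g x + indFn C x) x₀ := by
  intro p hp
  obtain ⟨⟨hgx₀, hhx₀⟩, hx₀C⟩ := hx₀
  have hp_near := hloc.eventually_subgradient_le hg2.2 hh2.2 hgx₀ hhx₀ hp
  exact mem_subdiffAt_add_indFn hg2.2 hx₀C hgx₀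
    (hg3.subgradient_le_of_eventually hg2.2 hC3 hx₀C hgx₀ hp_near)

/-- necessary optimality condition for local solutions of a DC program. -/
theorem stmt0 {X : Type*} [AddCommGroup X] [Module ℝ X] [TopologicalSpace X]
    [IsTopologicalAddGroup X] [ContinuousSMul ℝ X] [LocallyConvexSpace ℝ X] [T2Space X]
    (g h : X → EReal)
    (hg1 : LowerSemicontinuous g) (hg2 : ProperFn g) (hg3 : ConvexFn g)
    (hh1 : LowerSemicontinuous h) (hh2 : ProperFn h) (hh3 : ConvexFn h)
    (C : Set X) (hC1 : C.Nonempty) (hC2 : IsClosed C) (hC3 : Convex ℝ C)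
    (hdom : (domFn g ∩ C).Nonempty)
    (x₀ : X) (hx₀ : x₀ ∈ domFn g ∩ domFn h ∩ C)
    (hloc : IsLocalSolution g h C x₀) :
    SubdiffAt h x₀ ⊆ SubdiffAt (fun x => g x + indFn C x) x₀ :=
  stmt0_general g h hg2 hg3 hh2 C hC3 x₀ hx₀ hloc
end

section
/- Let g, h: X → ℝ ∪ {+∞} be proper generalized polyhedral convex functions with representations g(x) = max_{i∈I}(⟨u_i*, x⟩ + α_i) for x ∈ dom g and h(x) = max_{j∈J}(⟨v_j*, x⟩ + β_j) for x ∈ dom h, and let C ⊆ X be a nonempty convex set. Then a point x̄ ∈ int(dom g) ∩ int(dom h) ∩ C is a local solution of the problem: minimize g(x) − h(x) subject to x ∈ C, if and only if co{v_j* : j ∈ J(x̄)} ⊆ co{u_i* : i ∈ I(x̄)} + N_C(x̄). -/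
open Pointwise Topology

/-!
Near `x₀` only the active pieces matter: `maxAffine u a` and `maxAffine v b` coincide there with
the maxima over the active sets `I` and `J`, so `g - h` has a local minimum on `C` at `x₀` iff
`v j (x - x₀) ≤ max_{i ∈ I} u i (x - x₀)` for every `j ∈ J` and `x ∈ C`. Separating the image of
`C` in `ℝ^I` from an open orthant turns this max-inequality into a single convex combination
`q` of the `u i` with `v j - q ∈ N_C(x₀)`. Conversely, every element of `co {u i | i ∈ I}` is a
subgradient of `maxAffine u a` at `x₀`, and an active `v j` attaining `maxAffine v b x` is
enough to compare the values at `x` and `x₀`.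
-/

open Set Filter

section Orthant

variable {σ : Type*}

theorem apply_eq_sum_apply_single_mul [Fintype σ] [DecidableEq σ] (f : (σ → ℝ) →L[ℝ] ℝ)
    (y : σ → ℝ) : f y = ∑ i, f (Pi.single i 1) * y i := by
  conv_lhs => rw [← Finset.univ_sum_single y]
  refine (map_sum f _ _).trans (Finset.sum_congr rfl fun i _ => ?_)
  rw [show Pi.single i (y i) = y i • (Pi.single i 1 : σ → ℝ) by
    rw [← Pi.single_smul', smul_eq_mul, mul_one], map_smul, smul_eq_mul, mul_comm]

theorem apply_nonpos_of_forall_le_apply_le {f : (σ → ℝ) →L[ℝ] ℝ} {p : σ → ℝ} {c : ℝ}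
    (h : ∀ y ≤ p, f y ≤ c) {z : σ → ℝ} (hz : z ≤ 0) : f z ≤ 0 := by
  by_contra! hpos
  have ht : 0 < (c - f p + 1) / f z := div_pos (by linarith [h p le_rfl]) hpos
  have := h (p + ((c - f p + 1) / f z) • z)
    (add_le_of_nonpos_right (smul_nonpos_of_nonneg_of_nonpos ht.le hz))
  rw [map_add, map_smul, smul_eq_mul, div_mul_cancel₀ _ hpos.ne'] at this
  linarith

theorem exists_mem_stdSimplex_sum_mul_le [Fintype σ] {D : Set (σ → ℝ)} (hD : Convex ℝ D)
    (hne : D.Nonempty) {p : σ → ℝ} (h : ∀ y ∈ D, ∃ i, p i ≤ y i) :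
    ∃ w ∈ stdSimplex ℝ σ, ∀ y ∈ D, ∑ i, w i * p i ≤ ∑ i, w i * y i := by
  classical
  set N : Set (σ → ℝ) := univ.pi fun i => Iio (p i)
  have hND : Disjoint N D := disjoint_left.2 fun y hyN hyD => by
    obtain ⟨i, hi⟩ := h y hyD
    exact (hyN i trivial).not_ge hi
  obtain ⟨f, c, hfN, hfD⟩ := geometric_hahn_banach_open
    (convex_pi fun i _ => convex_Iio (p i)) (isOpen_set_pi finite_univ fun _ _ => isOpen_Iio)
    hD hND
  have hf_le_c : ∀ y ≤ p, f y ≤ c := fun y hy => by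
    have hy : y ∈ closure N := by
      rw [closure_pi_set]
      exact fun i _ => by simpa only [closure_Iio] using mem_Iic.2 (hy i)
    exact closure_minimal (fun z hz => (hfN z hz).le) (isClosed_le f.continuous continuous_const) hy
  set w : σ → ℝ := fun i => f (Pi.single i 1)
  have hw : ∀ i, 0 ≤ w i := fun i => by
    simpa [w] using apply_nonpos_of_forall_le_apply_le hf_le_c (z := -Pi.single i 1)
      (neg_nonpos.2 (Pi.single_nonneg.2 zero_le_one))
  have hw_sum : 0 < ∑ i, w i := by
    refine (Finset.sum_nonneg fun i _ => hw i).lt_of_ne fun h0 => ?_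
    have hw0 : ∀ i, f (Pi.single i 1) = 0 := fun i =>
      (Finset.sum_eq_zero_iff_of_nonneg fun i _ => hw i).1 h0.symm i (Finset.mem_univ i)
    have hf0 : ∀ y, f y = 0 := fun y => by
      rw [apply_eq_sum_apply_single_mul f]
      simp only [hw0, zero_mul, Finset.sum_const_zero]
    obtain ⟨d, hd⟩ := hne
    have h1 := hfN (p - 1) fun i _ => mem_Iio.2 (by simp)
    have h2 := hfD d hd
    rw [hf0] at h1 h2
    linarith
  have hdiv : ∀ y : σ → ℝ, ∑ i, w i / (∑ k, w k) * y i = f y / ∑ k, w k := fun y => by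
    rw [apply_eq_sum_apply_single_mul f, Finset.sum_div]
    exact Finset.sum_congr rfl fun i _ => by ring
  refine ⟨fun i => w i / ∑ k, w k,
    ⟨fun i => div_nonneg (hw i) hw_sum.le, by rw [← Finset.sum_div, div_self hw_sum.ne']⟩,
    fun y hy => ?_⟩
  rw [hdiv, hdiv]
  exact div_le_div_of_nonneg_right ((hf_le_c p le_rfl).trans (hfD y hy)) hw_sum.le

end Orthant

theorem mem_convexHull_add_normalConeAt_of_forall_exists_le {X ι : Type*} [AddCommGroup X]
    [Module ℝ X] [TopologicalSpace X] [Finite ι] {u : ι → X →L[ℝ] ℝ} {s : Set ι}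
    {p : X →L[ℝ] ℝ} {C : Set X} (hC : Convex ℝ C) {x₀ : X} (hx₀ : x₀ ∈ C)
    (h : ∀ x ∈ C, ∃ i ∈ s, p (x - x₀) ≤ u i (x - x₀)) :
    p ∈ convexHull ℝ (u '' s) + normalConeAt C x₀ := by
  have := Fintype.ofFinite s
  set L : X →ₗ[ℝ] s → ℝ := LinearMap.pi fun i => (u i - p).toLinearMap
  obtain ⟨w, ⟨hw₀, hw₁⟩, hw⟩ := exists_mem_stdSimplex_sum_mul_le (hC.linear_image L)
    ⟨L x₀, x₀, hx₀, rfl⟩ (p := L x₀) (by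
      rintro _ ⟨x, hx, rfl⟩
      obtain ⟨i, hi, hpu⟩ := h x hx
      refine ⟨⟨i, hi⟩, ?_⟩
      simp only [L, LinearMap.pi_apply, ContinuousLinearMap.coe_coe,
        sub_apply, map_sub] at hpu ⊢
      linarith)
  set q : X →L[ℝ] ℝ := ∑ i, w i • u i
  have hq : ∀ x, q x = ∑ i, w i * u i x := fun x => by simp [q]
  refine ⟨q, mem_convexHull_of_exists_fintype w (fun i => u i) hw₀ hw₁
    (fun i => mem_image_of_mem u i.2) rfl, p - q, fun x hx => ?_, add_sub_cancel q p⟩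
  have hx := hw (L x) ⟨x, hx, rfl⟩
  simp only [L, LinearMap.pi_apply, ContinuousLinearMap.coe_coe,
    sub_apply, mul_sub, Finset.sum_sub_distrib, ← Finset.sum_mul, hw₁,
    one_mul] at hx
  simp only [sub_apply, hq]
  linarith

section MaxAffine

variable {X τ : Type*} [AddCommGroup X] [Module ℝ X] [TopologicalSpace X] [Fintype τ]
  [Nonempty τ]

def maxAffine (w : τ → X →L[ℝ] ℝ) (c : τ → ℝ) (x : X) : ℝ :=
  Finset.univ.sup' Finset.univ_nonempty fun k => w k x + c k

def activeSet (w : τ → X →L[ℝ] ℝ) (c : τ → ℝ) (x₀ : X) : Set τ :=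
  {k | w k x₀ + c k = maxAffine w c x₀}

variable (w : τ → X →L[ℝ] ℝ) (c : τ → ℝ)

theorem le_maxAffine (k : τ) (x : X) : w k x + c k ≤ maxAffine w c x :=
  Finset.le_sup' (fun k => w k x + c k) (Finset.mem_univ k)

theorem exists_eq_maxAffine (x : X) : ∃ k, w k x + c k = maxAffine w c x := by
  obtain ⟨k, -, hk⟩ := Finset.exists_mem_eq_sup' Finset.univ_nonempty fun k => w k x + c k
  exact ⟨k, hk.symm⟩

theorem apply_sub_le_maxAffine_sub {x₀ : X} {k : τ} (hk : k ∈ activeSet w c x₀) (x : X) :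
    w k (x - x₀) ≤ maxAffine w c x - maxAffine w c x₀ := by
  have hk : w k x₀ + c k = maxAffine w c x₀ := hk
  have := le_maxAffine w c k x
  rw [map_sub]
  linarith

theorem apply_sub_le_maxAffine_sub_of_mem_convexHull {x₀ : X} {q : X →L[ℝ] ℝ}
    (hq : q ∈ convexHull ℝ (w '' activeSet w c x₀)) (x : X) :
    q (x - x₀) ≤ maxAffine w c x - maxAffine w c x₀ := by
  have hactive : w '' activeSet w c x₀ ⊆
      {q : X →L[ℝ] ℝ | q (x - x₀) ≤ maxAffine w c x - maxAffine w c x₀} := by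
    rintro _ ⟨k, hk, rfl⟩
    exact apply_sub_le_maxAffine_sub w c hk x
  exact convexHull_min hactive
    (convex_halfSpace_le ⟨fun _ _ => rfl, fun _ _ => rfl⟩ _) hq

theorem eventually_exists_mem_activeSet_eq_maxAffine (x₀ : X) :
    ∀ᶠ x in 𝓝 x₀, ∃ k ∈ activeSet w c x₀, w k x + c k = maxAffine w c x := by
  obtain ⟨k₀, hk₀⟩ := exists_eq_maxAffine w c x₀
  have hcont : ∀ k, Continuous fun x => w k x + c k := fun k => by fun_prop
  have hinactive : ∀ᶠ x in 𝓝 x₀, ∀ k ∉ activeSet w c x₀, w k x + c k < w k₀ x + c k₀ := by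
    refine eventually_all.2 fun k => ?_
    by_cases hk : k ∈ activeSet w c x₀
    · exact Eventually.of_forall fun _ h => absurd hk h
    · have : w k x₀ + c k < w k₀ x₀ + c k₀ := hk₀ ▸ (le_maxAffine w c k x₀).lt_of_ne hk
      filter_upwards [(hcont k).continuousAt.eventually_lt (hcont k₀).continuousAt this]
        with x hx _ using hx
  filter_upwards [hinactive] with x hx
  obtain ⟨k, hk⟩ := exists_eq_maxAffine w c x
  refine ⟨k, by_contra fun hna => ?_, hk⟩
  exact (hx k hna).not_ge (hk ▸ le_maxAffine w c k₀ x)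

end MaxAffine

theorem convex_normalConeAt {X : Type*} [AddCommGroup X] [Module ℝ X] [TopologicalSpace X]
    (C : Set X) (x₀ : X) : Convex ℝ (normalConeAt C x₀) := by
  intro q hq r hr s t hs ht _ x hx
  have := add_nonpos (mul_nonpos_of_nonneg_of_nonpos hs (hq x hx))
    (mul_nonpos_of_nonneg_of_nonpos ht (hr x hx))
  simp only [add_apply, smul_apply, smul_eq_mul]
  linarith

section LocalMin

variable {X ι κ : Type*} [AddCommGroup X] [Module ℝ X] [TopologicalSpace X]
  [IsTopologicalAddGroup X] [ContinuousSMul ℝ X] [Fintype ι] [Nonempty ι] [Fintype κ]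
  [Nonempty κ] {u : ι → X →L[ℝ] ℝ} {a : ι → ℝ} {v : κ → X →L[ℝ] ℝ} {b : κ → ℝ} {C : Set X}
  {x₀ : X}

theorem exists_mem_activeSet_apply_sub_le_of_isLocalMinOn
    (hmin : IsLocalMinOn (fun x => maxAffine u a x - maxAffine v b x) C x₀) (hC : Convex ℝ C)
    (hx₀ : x₀ ∈ C) {j : κ} (hj : j ∈ activeSet v b x₀) {x : X} (hx : x ∈ C) :
    ∃ i ∈ activeSet u a x₀, v j (x - x₀) ≤ u i (x - x₀) := by
  set γ : ℝ → X := fun t => x₀ + t • (x - x₀)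
  have hγ : Tendsto γ (𝓝[>] 0) (𝓝 x₀) := by
    have : Continuous γ := by fun_prop
    simpa [γ] using (this.tendsto 0).mono_left nhdsWithin_le_nhds
  have hγC : Tendsto γ (𝓝[>] 0) (𝓝[C] x₀) := by
    refine tendsto_nhdsWithin_iff.2 ⟨hγ, ?_⟩
    filter_upwards [Ioo_mem_nhdsGT one_pos] with t ht
    exact hC.add_smul_sub_mem hx₀ hx ⟨ht.1.le, ht.2.le⟩
  obtain ⟨t, ht, hmin_t, i, hi, hit⟩ := (eventually_mem_nhdsWithin.and ((hγC.eventually hmin).and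
    (hγ.eventually (eventually_exists_mem_activeSet_eq_maxAffine u a x₀)))).exists
  refine ⟨i, hi, le_of_mul_le_mul_left ?_ (show (0 : ℝ) < t from ht)⟩
  have hjt := le_maxAffine v b j (γ t)
  have hi : u i x₀ + a i = maxAffine u a x₀ := hi
  have hj : v j x₀ + b j = maxAffine v b x₀ := hj
  simp only [γ, map_add, map_smul, smul_eq_mul] at hmin_t hit hjt
  linarith

theorem isLocalMinOn_maxAffine_sub_iff (hC : Convex ℝ C) (hx₀ : x₀ ∈ C) :
    IsLocalMinOn (fun x => maxAffine u a x - maxAffine v b x) C x₀ ↔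
      convexHull ℝ (v '' activeSet v b x₀) ⊆
        convexHull ℝ (u '' activeSet u a x₀) + normalConeAt C x₀ := by
  constructor
  · intro hmin
    refine convexHull_min ?_ ((convex_convexHull ℝ _).add (convex_normalConeAt C x₀))
    rintro _ ⟨j, hj, rfl⟩
    exact mem_convexHull_add_normalConeAt_of_forall_exists_le hC hx₀ fun x hx =>
      exists_mem_activeSet_apply_sub_le_of_isLocalMinOn hmin hC hx₀ hj hx
  · intro hsub
    filter_upwards [nhdsWithin_le_nhds (eventually_exists_mem_activeSet_eq_maxAffine v b x₀),
      self_mem_nhdsWithin] with x ⟨j, hj, hjx⟩ hx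
    obtain ⟨q, hq, n, hn, hqn⟩ := hsub (subset_convexHull ℝ _ (mem_image_of_mem v hj))
    have hq := apply_sub_le_maxAffine_sub_of_mem_convexHull u a hq x
    have hn := hn x hx
    have hj : v j x₀ + b j = maxAffine v b x₀ := hj
    have hv : ∀ y, v j y = q y + n y := fun y => by rw [← hqn, add_apply]
    rw [hv] at hjx hj
    rw [map_sub] at hq
    linarith

end LocalMin

theorem dcObj_eq_coe_sub {X : Type*} {g h : X → EReal} {x : X} {r s : ℝ} (hg : g x = r)
    (hh : h x = s) : dcObj g h x = ((r - s : ℝ) : EReal) := by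
  simp [dcObj, hg, hh, EReal.coe_sub]

theorem isLocalSolution_iff_isLocalMinOn {X : Type*} [TopologicalSpace X] {g h : X → EReal}
    {φ : X → ℝ} {C : Set X} {x₀ : X} (hφ : dcObj g h =ᶠ[𝓝 x₀] fun x => (φ x : EReal))
    (hx₀ : x₀ ∈ C) : IsLocalSolution g h C x₀ ↔ IsLocalMinOn φ C x₀ := by
  have hφC : ∀ᶠ x in 𝓝[C] x₀, (dcObj g h x₀ ≤ dcObj g h x ↔ φ x₀ ≤ φ x) := by
    filter_upwards [nhdsWithin_le_nhds hφ] with x hx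
    rw [hx, hφ.eq_of_nhds, EReal.coe_le_coe_iff]
  rw [IsLocalSolution, IsLocalMinOn, IsMinFilter, ← eventually_congr hφC, and_iff_right hx₀,
    eventually_nhdsWithin_iff, eventually_iff_exists_mem]
  simp only [mem_inter_iff, and_imp]
  exact exists_congr fun U => and_congr_right fun _ => forall_congr' fun _ => Imp.swap

theorem stmt2_general {X : Type*} [AddCommGroup X] [Module ℝ X] [TopologicalSpace X]
    [IsTopologicalAddGroup X] [ContinuousSMul ℝ X]
    (ι κ : Type*) [Fintype ι] [Nonempty ι] [Fintype κ] [Nonempty κ]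
    (u : ι → (X →L[ℝ] ℝ)) (a : ι → ℝ) (v : κ → (X →L[ℝ] ℝ)) (b : κ → ℝ)
    (g h : X → EReal)
    (hgrep : ∀ x ∈ domFn g,
      g x = ((Finset.univ.sup' Finset.univ_nonempty fun i => u i x + a i : ℝ) : EReal))
    (hhrep : ∀ x ∈ domFn h,
      h x = ((Finset.univ.sup' Finset.univ_nonempty fun j => v j x + b j : ℝ) : EReal))
    (C : Set X) (hC3 : Convex ℝ C)
    (x₀ : X) (hx₀ : x₀ ∈ interior (domFn g) ∩ interior (domFn h) ∩ C) :
    IsLocalSolution g h C x₀ ↔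
      convexHull ℝ (v '' {j : κ | ((v j x₀ + b j : ℝ) : EReal) = h x₀}) ⊆
        convexHull ℝ (u '' {i : ι | ((u i x₀ + a i : ℝ) : EReal) = g x₀}) +
          normalConeAt C x₀ := by
  obtain ⟨⟨hxg, hxh⟩, hxC⟩ := hx₀
  have hdc : dcObj g h =ᶠ[𝓝 x₀] fun x => ((maxAffine u a x - maxAffine v b x : ℝ) : EReal) := by
    filter_upwards [isOpen_interior.mem_nhds hxg, isOpen_interior.mem_nhds hxh] with x hxg hxh
    exact dcObj_eq_coe_sub (hgrep x (interior_subset hxg)) (hhrep x (interior_subset hxh))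
  rw [isLocalSolution_iff_isLocalMinOn hdc hxC, hgrep x₀ (interior_subset hxg),
    hhrep x₀ (interior_subset hxh)]
  simp only [EReal.coe_eq_coe_iff]
  exact isLocalMinOn_maxAffine_sub_iff hC3 hxC

/-- characterization of local solutions of a gpdc program via convex hulls
of active gradients and the normal cone. -/
theorem stmt2 {X : Type*} [AddCommGroup X] [Module ℝ X] [TopologicalSpace X]
    [IsTopologicalAddGroup X] [ContinuousSMul ℝ X] [LocallyConvexSpace ℝ X] [T2Space X]
    (ι κ : Type*) [Fintype ι] [Nonempty ι] [Fintype κ] [Nonempty κ]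
    (u : ι → (X →L[ℝ] ℝ)) (a : ι → ℝ) (v : κ → (X →L[ℝ] ℝ)) (b : κ → ℝ)
    (g h : X → EReal)
    (hg2 : ProperFn g) (hg3 : IsGPCF X g)
    (hh2 : ProperFn h) (hh3 : IsGPCF X h)
    (hgrep : ∀ x ∈ domFn g,
      g x = ((Finset.univ.sup' Finset.univ_nonempty fun i => u i x + a i : ℝ) : EReal))
    (hhrep : ∀ x ∈ domFn h,
      h x = ((Finset.univ.sup' Finset.univ_nonempty fun j => v j x + b j : ℝ) : EReal))
    (C : Set X) (hC1 : C.Nonempty) (hC3 : Convex ℝ C)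
    (x₀ : X) (hx₀ : x₀ ∈ interior (domFn g) ∩ interior (domFn h) ∩ C) :
    IsLocalSolution g h C x₀ ↔
      convexHull ℝ (v '' {j : κ | ((v j x₀ + b j : ℝ) : EReal) = h x₀}) ⊆
        convexHull ℝ (u '' {i : ι | ((u i x₀ + a i : ℝ) : EReal) = g x₀}) +
          normalConeAt C x₀ :=
  stmt2_general ι κ u a v b g h hgrep hhrep C hC3 x₀ hx₀
end

section
/- Let g: X → ℝ ∪ {+∞} be a lower semicontinuous, proper, convex function, h: X → ℝ ∪ {+∞} a proper generalized polyhedral convex function, and C ⊆ X a nonempty closed convex set with C ⊆ dom g and C ⊆ int(dom h). Then the set S of global solutions of the problem: minimize g(x) − h(x) subject to x ∈ C, is the union of finitely many closed convex subsets of C. -/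
open Pointwise Topology

/-!
On its domain, a proper generalized polyhedral convex function `h` is the maximum of finitely
many continuous affine functions `ℓᵢ`: the constraints of its epigraph that involve the vertical
coordinate are exactly lower bounds `t ≥ ℓᵢ x`. Hence, if `m` is the optimal value, a point
`x ∈ C` is a solution iff `g x ≤ ℓᵢ x + m` for some `i`, and each set
`{x ∈ C | g x ≤ ℓᵢ x + m}` is closed because `g` is lower semicontinuous and convex because `g` is
convex and `ℓᵢ` is affine.
-/

lemma LowerSemicontinuous.isClosed_setOf_le_coe {X : Type*} [TopologicalSpace X] {g : X → EReal}
    (hg : LowerSemicontinuous g) {c : X → ℝ} (hc : Continuous c) :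
    IsClosed {x | g x ≤ (c x : EReal)} :=
  hg.isClosed_epigraph.preimage (continuous_id.prodMk (continuous_coe_real_ereal.comp hc))

lemma ConvexFn.convex_setOf_le_affine {X : Type*} [AddCommGroup X] [Module ℝ X]
    [TopologicalSpace X] {g : X → EReal} (hg : ConvexFn g) (φ : X →L[ℝ] ℝ) (b : ℝ) :
    Convex ℝ {x | g x ≤ ((φ x + b : ℝ) : EReal)} := by
  intro x hx y hy s t hs ht hst
  have hcomb : s • (x, φ x + b) + t • (y, φ y + b) ∈ epigraph g := hg hx hy hs ht hst
  have hpoint : s • (x, φ x + b) + t • (y, φ y + b) = (s • x + t • y, φ (s • x + t • y) + b) := by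
    ext
    · simp
    · simp only [Prod.snd_add, Prod.smul_snd, smul_eq_mul, map_add, map_smul]
      linear_combination b * hst
  rw [hpoint] at hcomb
  exact hcomb

lemma exists_eq_of_forall_le_iff {ι : Type*} [Finite ι] {f : ι → ℝ} {r : ℝ}
    (h : ∀ t, r ≤ t ↔ ∀ i, f i ≤ t) : ∃ i, f i = r := by
  rcases isEmpty_or_nonempty ι with hι | hι
  · linarith [(h (r - 1)).2 hι.elim]
  · obtain ⟨i, hi⟩ := Finite.exists_max f
    exact ⟨i, le_antisymm ((h r).1 le_rfl i) ((h (f i)).2 hi)⟩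

lemma ContinuousLinearMap.map_prod_real {X : Type*} [AddCommGroup X] [Module ℝ X]
    [TopologicalSpace X] (f : X × ℝ →L[ℝ] ℝ) (x : X) (t : ℝ) :
    f (x, t) = f (x, 0) + t * f (0, 1) := by
  conv_lhs => rw [show (x, t) = (x, (0 : ℝ)) + t • ((0 : X), (1 : ℝ)) by ext <;> simp]
  rw [map_add, map_smul, smul_eq_mul]

section Polyhedral

variable {X : Type*} [AddCommGroup X] [Module ℝ X] [TopologicalSpace X] {ψ : X → EReal}
  {L : AffineSubspace ℝ (X × ℝ)} {p : ℕ} {a : Fin p → X × ℝ →L[ℝ] ℝ} {c : Fin p → ℝ}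

lemma le_coe_iff_of_epigraph_eq (hepi : epigraph ψ = {q | q ∈ L ∧ ∀ k, a k q ≤ c k})
    (x : X) (t : ℝ) : ψ x ≤ t ↔ (x, t) ∈ L ∧ ∀ k, a k (x, t) ≤ c k := by
  change (x, t) ∈ epigraph ψ ↔ _
  rw [hepi]
  rfl

lemma vertical_mem_direction_of_epigraph_eq
    (hepi : epigraph ψ = {q | q ∈ L ∧ ∀ k, a k q ≤ c k}) {x₀ : X} {r₀ : ℝ} (hx₀ : ψ x₀ = r₀) :
    ((0 : X), (1 : ℝ)) ∈ L.direction := by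
  have h₀ := (le_coe_iff_of_epigraph_eq hepi x₀ r₀).1 hx₀.le
  have h₁ := (le_coe_iff_of_epigraph_eq hepi x₀ (r₀ + 1)).1
    (by rw [hx₀]; exact_mod_cast (lt_add_one r₀).le)
  simpa [vsub_eq_sub] using L.vsub_mem_direction h₁.1 h₀.1

lemma map_vertical_nonpos_of_epigraph_eq
    (hepi : epigraph ψ = {q | q ∈ L ∧ ∀ k, a k q ≤ c k}) {x₀ : X} {r₀ : ℝ} (hx₀ : ψ x₀ = r₀)
    (k : Fin p) : a k (0, 1) ≤ 0 := by
  by_contra! hpos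
  set t := max r₀ ((c k - a k (x₀, 0) + 1) / a k (0, 1))
  have hle := ((le_coe_iff_of_epigraph_eq hepi x₀ t).1
    (by rw [hx₀]; exact_mod_cast le_max_left _ _)).2 k
  have ht : c k - a k (x₀, 0) + 1 ≤ t * a k (0, 1) := (div_le_iff₀ hpos).1 (le_max_right _ _)
  rw [ContinuousLinearMap.map_prod_real] at hle
  linarith

lemma le_iff_constraints_of_epigraph_eq (hepi : epigraph ψ = {q | q ∈ L ∧ ∀ k, a k q ≤ c k})
    (hvert : ((0 : X), (1 : ℝ)) ∈ L.direction) {x : X} {r : ℝ} (hx : ψ x = r) (t : ℝ) :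
    r ≤ t ↔ ∀ k, a k (x, 0) + t * a k (0, 1) ≤ c k := by
  have hr := (le_coe_iff_of_epigraph_eq hepi x r).1 hx.le
  rw [← EReal.coe_le_coe_iff, ← hx, le_coe_iff_of_epigraph_eq hepi]
  simp_rw [(a _).map_prod_real x t]
  refine and_iff_right ?_
  rw [show (x, t) = (t - r) • ((0 : X), (1 : ℝ)) +ᵥ (x, r) by ext <;> simp [vadd_eq_add]]
  exact L.vadd_mem_of_mem_direction (L.direction.smul_mem _ hvert) hr.1

end Polyhedral

theorem IsGPCF.exists_eq_max_affine {X : Type*} [AddCommGroup X] [Module ℝ X]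
    [TopologicalSpace X] {ψ : X → EReal} (hψ : IsGPCF X ψ) (hproper : ProperFn ψ) :
    ∃ (ι : Type) (_ : Fintype ι) (φ : ι → X →L[ℝ] ℝ) (b : ι → ℝ), ∀ x ∈ domFn ψ,
      (∀ i, ((φ i x + b i : ℝ) : EReal) ≤ ψ x) ∧ ∃ i, ψ x = ((φ i x + b i : ℝ) : EReal) := by
  obtain ⟨L, p, a, c, -, hepi⟩ := hψ
  obtain ⟨⟨x₀, hx₀⟩, hbot⟩ := hproper
  have hr₀ : ψ x₀ = (ψ x₀).toReal := (EReal.coe_toReal hx₀ (hbot x₀)).symm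
  have hvert := vertical_mem_direction_of_epigraph_eq hepi hr₀
  have hnonpos := map_vertical_nonpos_of_epigraph_eq hepi hr₀
  set φ : {k // a k (0, 1) < 0} → X →L[ℝ] ℝ :=
    fun k => -(a k (0, 1))⁻¹ • (a k).comp (.inl ℝ X ℝ)
  set b : {k // a k (0, 1) < 0} → ℝ := fun k => c k / a k (0, 1)
  refine ⟨{k // a k (0, 1) < 0}, inferInstance, φ, b, fun x hx => ?_⟩
  have hr : ψ x = (ψ x).toReal := (EReal.coe_toReal hx (hbot x)).symm
  have hbound : ∀ k : {k // a k (0, 1) < 0}, ∀ t,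
      φ k x + b k ≤ t ↔ a k (x, 0) + t * a k (0, 1) ≤ c k := by
    intro k t
    rw [show φ k x + b k = (c k - a k (x, 0)) / a k (0, 1) by
      simp only [φ, b, FunLike.coe_smul, Pi.smul_apply, ContinuousLinearMap.comp_apply,
        ContinuousLinearMap.inl_apply, smul_eq_mul]
      field_simp
      ring, div_le_iff_of_neg k.2]
    constructor <;> intro <;> linarith
  have key : ∀ t, (ψ x).toReal ≤ t ↔ ∀ k, φ k x + b k ≤ t := by
    intro t
    simp_rw [le_iff_constraints_of_epigraph_eq hepi hvert hr, hbound]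
    refine ⟨fun h k => h k, fun h k => ?_⟩
    rcases (hnonpos k).lt_or_eq with hk | hk
    · exact h ⟨k, hk⟩
    · simpa [hk] using (le_iff_constraints_of_epigraph_eq hepi hvert hr _).1 le_rfl k
  rw [hr]
  simp_rw [EReal.coe_le_coe_iff, EReal.coe_eq_coe_iff]
  obtain ⟨i, hi⟩ := exists_eq_of_forall_le_iff key
  exact ⟨(key _).1 le_rfl, i, hi.symm⟩

lemma dcObj_le_coe_iff {X : Type*} {g h : X → EReal} {x : X} (hx_top : h x ≠ ⊤) (hx_bot : h x ≠ ⊥)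
    (m : ℝ) : dcObj g h x ≤ m ↔ g x ≤ h x + m := by
  rw [dcObj, if_neg (fun hx => hx_top hx.2), EReal.sub_le_iff_le_add (.inl hx_bot) (.inl hx_top),
    add_comm]

lemma IsSolution.setOf_isSolution_eq {X : Type*} {g h : X → EReal} {C : Set X} {x₀ : X}
    (hx₀ : IsSolution g h C x₀) :
    {x | IsSolution g h C x} = {x | x ∈ C ∧ dcObj g h x ≤ dcObj g h x₀} := by
  ext x
  exact ⟨fun hx => ⟨hx.1, hx.2 x₀ hx₀.1⟩, fun hx => ⟨hx.1, fun y hy => hx.2.trans (hx₀.2 y hy)⟩⟩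

theorem stmt7_general {X : Type*} [AddCommGroup X] [Module ℝ X] [TopologicalSpace X]
    (g h : X → EReal)
    (hg1 : LowerSemicontinuous g) (hg2 : ProperFn g) (hg3 : ConvexFn g)
    (hh2 : ProperFn h) (hh3 : IsGPCF X h)
    (C : Set X) (hC2 : IsClosed C) (hC3 : Convex ℝ C)
    (hCg : C ⊆ domFn g) (hCh : C ⊆ interior (domFn h)) :
    ∃ (n : ℕ) (A : Fin n → Set X), (∀ i, IsClosed (A i) ∧ Convex ℝ (A i) ∧ A i ⊆ C) ∧
      {x : X | IsSolution g h C x} = ⋃ i, A i := by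
  by_cases hS : ∃ x₀, IsSolution g h C x₀
  swap
  · refine ⟨0, Fin.elim0, fun i => i.elim0, ?_⟩
    simpa [Set.eq_empty_iff_forall_notMem] using hS
  obtain ⟨x₀, hx₀⟩ := hS
  have hhC : ∀ x ∈ C, h x ≠ ⊤ := fun x hx => interior_subset (hCh hx)
  obtain ⟨m, hm⟩ : ∃ m : ℝ, dcObj g h x₀ = m :=
    ⟨(g x₀).toReal - (h x₀).toReal, by
      rw [dcObj, if_neg (fun hx => hhC x₀ hx₀.1 hx.2), EReal.coe_sub,
        EReal.coe_toReal (hCg hx₀.1) (hg2.2 x₀), EReal.coe_toReal (hhC x₀ hx₀.1) (hh2.2 x₀)]⟩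
  obtain ⟨ι, _, φ, b, hmax⟩ := hh3.exists_eq_max_affine hh2
  let A : ι → Set X := fun i => {x | x ∈ C ∧ g x ≤ ((φ i x + (b i + m) : ℝ) : EReal)}
  refine ⟨Fintype.card ι, A ∘ (Fintype.equivFin ι).symm, fun _ =>
    ⟨hC2.inter (hg1.isClosed_setOf_le_coe (by fun_prop)),
      hC3.inter (hg3.convex_setOf_le_affine _ _), fun _ hx => hx.1⟩, ?_⟩
  rw [Function.comp_def, (Fintype.equivFin ι).symm.surjective.iUnion_comp A,
    hx₀.setOf_isSolution_eq, hm]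
  ext x
  simp only [A, Set.mem_ofPred_eq, Set.mem_iUnion, exists_and_left]
  refine and_congr_right fun hx => ?_
  obtain ⟨hle, i, hi⟩ := hmax x (hhC x hx)
  rw [dcObj_le_coe_iff (hhC x hx) (hh2.2 x)]
  have hcoe : ∀ j, ((φ j x + (b j + m) : ℝ) : EReal) = ((φ j x + b j : ℝ) : EReal) + m :=
    fun j => by rw [← add_assoc, EReal.coe_add]
  simp_rw [hcoe]
  exact ⟨fun hg => ⟨i, hi ▸ hg⟩, fun ⟨j, hj⟩ => hj.trans (by gcongr; exact hle j)⟩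

/-- the global solution set is the union of finitely many closed convex
subsets of `C`. -/
theorem stmt7 {X : Type*} [AddCommGroup X] [Module ℝ X] [TopologicalSpace X]
    [IsTopologicalAddGroup X] [ContinuousSMul ℝ X] [LocallyConvexSpace ℝ X] [T2Space X]
    (g h : X → EReal)
    (hg1 : LowerSemicontinuous g) (hg2 : ProperFn g) (hg3 : ConvexFn g)
    (hh2 : ProperFn h) (hh3 : IsGPCF X h)
    (C : Set X) (hC1 : C.Nonempty) (hC2 : IsClosed C) (hC3 : Convex ℝ C)
    (hCg : C ⊆ domFn g) (hCh : C ⊆ interior (domFn h)) :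
    ∃ (n : ℕ) (A : Fin n → Set X), (∀ i, IsClosed (A i) ∧ Convex ℝ (A i) ∧ A i ⊆ C) ∧
      {x : X | IsSolution g h C x} = ⋃ i, A i :=
  stmt7_general g h hg1 hg2 hg3 hh2 hh3 C hC2 hC3 hCg hCh
end

section
/- Let g: X → ℝ ∪ {+∞} be a lower semicontinuous, proper, convex function, h: X → ℝ ∪ {+∞} a proper generalized polyhedral convex function with representation h(x) = max_{j∈J}(⟨v_j*, x⟩ + β_j) for x ∈ dom h, and C ⊆ X a nonempty closed convex set with C ⊆ dom g and C ⊆ int(dom h). Then inf_{x∈C}(g(x) − h(x)) = min_{j∈J} α_j, where α_j = inf_{x∈C}(g(x) − ⟨v_j*, x⟩ − β_j); moreover, the global solution set S of the problem: minimize g(x) − h(x) subject to x ∈ C, satisfies S = ⋃_{j∈J*} S^j, where J* = {j ∈ J : α_j = min_{j'∈J} α_{j'}} and S^j is the solution set of the convex problem: minimize g(x) − ⟨v_j*, x⟩ − β_j subject to x ∈ C. -/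
open Pointwise Topology

/-
On `C` the function `g` is finite and `h` is the maximum of the affine functions
`⟨v j, ·⟩ + b j`, so `g - h` is the pointwise minimum of the finitely many convex objectives
`g - ⟨v j, ·⟩ - b j`. Minimizing a pointwise minimum is the same as minimizing each member
and keeping the best: infima commute, and a point minimizes the minimum exactly when it
minimizes a member whose optimal value is the overall optimum.
-/

section PointwiseInfimum

variable {ι α β : Type*}

theorem biInf_eq_iInf_biInf_of_eqOn [CompleteLattice β] {φ : α → β} {f : ι → α → β}
    {s : Set α} (hφ : s.EqOn φ fun x => ⨅ i, f i x) :
    ⨅ x ∈ s, φ x = ⨅ i, ⨅ x ∈ s, f i x :=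
  calc ⨅ x ∈ s, φ x = ⨅ x ∈ s, ⨅ i, f i x :=
        iInf_congr fun _ => iInf_congr fun hx => hφ hx
    _ = ⨅ i, ⨅ x ∈ s, f i x := (iInf_congr fun _ => iInf_comm).trans iInf_comm

theorem IsMinOn.biInf_eq [CompleteLattice β] {f : α → β} {s : Set α} {a : α} (ha : a ∈ s)
    (h : IsMinOn f s a) : ⨅ x ∈ s, f x = f a :=
  le_antisymm (iInf₂_le a ha) (le_iInf₂ fun _ hx => h hx)

theorem isMinOn_iff_exists_isMinOn_of_eqOn [Finite ι] [Nonempty ι] [CompleteLinearOrder β]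
    {φ : α → β} {f : ι → α → β} {s : Set α} (hφ : s.EqOn φ fun x => ⨅ i, f i x)
    {a : α} (ha : a ∈ s) :
    IsMinOn φ s a ↔
      ∃ i, (⨅ x ∈ s, f i x) = (⨅ i', ⨅ x ∈ s, f i' x) ∧ IsMinOn (f i) s a := by
  rw [← biInf_eq_iInf_biInf_of_eqOn hφ]
  constructor
  · intro hmin
    obtain ⟨i, hi⟩ := Finite.exists_min fun i => f i a
    have hφa : φ a = f i a := by
      rw [hφ ha]
      exact le_antisymm (iInf_le _ i) (le_iInf hi)
    have hmin_i : IsMinOn (f i) s a := fun x hx =>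
      calc f i a = φ a := hφa.symm
        _ ≤ φ x := hmin hx
        _ ≤ f i x := by rw [hφ hx]; exact iInf_le _ i
    refine ⟨i, ?_, hmin_i⟩
    rw [hmin_i.biInf_eq ha, hmin.biInf_eq ha, hφa]
  · rintro ⟨i, hopt, hmin_i⟩ x hx
    calc φ a ≤ f i a := by rw [hφ ha]; exact iInf_le _ i
      _ = ⨅ x ∈ s, φ x := by rw [← hopt, hmin_i.biInf_eq ha]
      _ ≤ φ x := iInf₂_le x hx

end PointwiseInfimum

theorem dcObj_eq_iInf_sub_of_eq_sup' {X ι : Type*} [Fintype ι] [Nonempty ι]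
    {g h : X → EReal} {x : X} (hg_top : g x ≠ ⊤) (hg_bot : g x ≠ ⊥) (c : ι → ℝ)
    (hh : h x = ((Finset.univ.sup' Finset.univ_nonempty c : ℝ) : EReal)) :
    dcObj g h x = ⨅ i, g x - (c i : EReal) := by
  obtain ⟨r, hr⟩ : ∃ r : ℝ, g x = r := ⟨_, (EReal.coe_toReal hg_top hg_bot).symm⟩
  obtain ⟨i₀, -, hi₀⟩ := Finset.exists_mem_eq_sup' Finset.univ_nonempty c
  have hdc : dcObj g h x = ((r - c i₀ : ℝ) : EReal) := by
    rw [dcObj, if_neg (by simp [hg_top]), hh, hi₀, hr, EReal.coe_sub]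
  rw [hdc, hr]
  refine le_antisymm (le_iInf fun i => ?_) (iInf_le_of_le i₀ (EReal.coe_sub _ _).le)
  rw [← EReal.coe_sub, EReal.coe_le_coe_iff, ← hi₀]
  linarith [Finset.le_sup' c (Finset.mem_univ i)]

theorem stmt8_general {X : Type*} [AddCommGroup X] [Module ℝ X] [TopologicalSpace X]
    (κ : Type*) [Fintype κ] [Nonempty κ]
    (v : κ → (X →L[ℝ] ℝ)) (b : κ → ℝ)
    (g h : X → EReal)
    (hg2 : ProperFn g)
    (hhrep : ∀ x ∈ domFn h,
      h x = ((Finset.univ.sup' Finset.univ_nonempty fun j => v j x + b j : ℝ) : EReal))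
    (C : Set X)
    (hCg : C ⊆ domFn g) (hCh : C ⊆ interior (domFn h))
    (aVal : κ → EReal)
    (haVal : ∀ j, aVal j = ⨅ x ∈ C, (g x - ((v j x + b j : ℝ) : EReal))) :
    (⨅ x ∈ C, dcObj g h x) = (⨅ j, aVal j) ∧
      {x : X | IsSolution g h C x} =
        ⋃ j ∈ {j : κ | aVal j = ⨅ j', aVal j'},
          {x ∈ C | ∀ x' ∈ C,
            g x - ((v j x + b j : ℝ) : EReal) ≤ g x' - ((v j x' + b j : ℝ) : EReal)} := by
  have hdc : C.EqOn (dcObj g h) fun x => ⨅ j, g x - ((v j x + b j : ℝ) : EReal) :=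
    fun x hx => dcObj_eq_iInf_sub_of_eq_sup' (hCg hx) (hg2.2 x) _
      (hhrep x (interior_subset (hCh hx)))
  obtain rfl : aVal = _ := funext haVal
  refine ⟨biInf_eq_iInf_biInf_of_eqOn hdc, Set.ext fun x => ?_⟩
  simp only [Set.mem_iUnion, Set.mem_ofPred_eq, exists_prop]
  constructor
  · rintro ⟨hx, hmin⟩
    obtain ⟨j, hopt, hmin_j⟩ := (isMinOn_iff_exists_isMinOn_of_eqOn hdc hx).1 hmin
    exact ⟨j, hopt, hx, hmin_j⟩
  · rintro ⟨j, hopt, hx, hmin_j⟩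
    exact ⟨hx, (isMinOn_iff_exists_isMinOn_of_eqOn hdc hx).2 ⟨j, hopt, hmin_j⟩⟩

/-- the optimal value of the DC program equals the minimum over `j ∈ J` of
the optimal values of the convex programs `min_{x ∈ C} (g(x) - ⟨v_j, x⟩ - β_j)`, and the
global solution set is the union of the solution sets of the optimal such programs. -/
theorem stmt8 {X : Type*} [AddCommGroup X] [Module ℝ X] [TopologicalSpace X]
    [IsTopologicalAddGroup X] [ContinuousSMul ℝ X] [LocallyConvexSpace ℝ X] [T2Space X]
    (κ : Type*) [Fintype κ] [Nonempty κ]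
    (v : κ → (X →L[ℝ] ℝ)) (b : κ → ℝ)
    (g h : X → EReal)
    (hg1 : LowerSemicontinuous g) (hg2 : ProperFn g) (hg3 : ConvexFn g)
    (hh2 : ProperFn h) (hh3 : IsGPCF X h)
    (hhrep : ∀ x ∈ domFn h,
      h x = ((Finset.univ.sup' Finset.univ_nonempty fun j => v j x + b j : ℝ) : EReal))
    (C : Set X) (hC1 : C.Nonempty) (hC2 : IsClosed C) (hC3 : Convex ℝ C)
    (hCg : C ⊆ domFn g) (hCh : C ⊆ interior (domFn h))
    (aVal : κ → EReal)
    (haVal : ∀ j, aVal j = ⨅ x ∈ C, (g x - ((v j x + b j : ℝ) : EReal))) :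
    (⨅ x ∈ C, dcObj g h x) = (⨅ j, aVal j) ∧
      {x : X | IsSolution g h C x} =
        ⋃ j ∈ {j : κ | aVal j = ⨅ j', aVal j'},
          {x ∈ C | ∀ x' ∈ C,
            g x - ((v j x + b j : ℝ) : EReal) ≤ g x' - ((v j x' + b j : ℝ) : EReal)} :=
  stmt8_general κ v b g h hg2 hhrep C hCg hCh aVal haVal
end
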